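/- Let d ≥ 3 be an integer such that both d and (d−1)/2 are odd, and let u ≠ v be two extreme points of Ξ. Then the closed segment [u,v] is an extreme subset of Ξ whose relative interior (the open segment between u and v) meets the hyperplane H_{d/2} if and only if u, v ∈ {0,1}^d, u and v differ in exactly one coordinate, and the coordinate sums of u and v are (d−1)/2 and (d+1)/2 in some order. -/

import Mathlib

open Set Pointwise

noncomputable section

variable (d : ℕ)

/-- The vertices of the hypercube `[0,1]^d`. -/
def cubeVerts : Set (Fin d → ℝ) := {x | ∀ i, x i = 0 ∨ x i = 1}

/-- The set `𝒞` of centers of the `(d-1)/2`-dimensional faces of `[0,1]^d`: points with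
exactly `(d-1)/2` coordinates equal to `1/2` and all remaining coordinates in `{0,1}`. -/
def centerSet : Set (Fin d → ℝ) :=
  {x | (∀ i, x i = 0 ∨ x i = 1/2 ∨ x i = 1) ∧ {i | x i = 1/2}.ncard = (d - 1) / 2}

/-- The slab `L` bounded by the hyperplanes `H_{(d-1)/2}` and `H_{(d+1)/2}`. -/
def slabL : Set (Fin d → ℝ) :=
  {x | ((d : ℝ) - 1) / 2 ≤ ∑ i, x i ∧ ∑ i, x i ≤ ((d : ℝ) + 1) / 2}

/-- The set `𝒱 = (𝒞 ∖ L) ∪ ({0,1}^d ∩ L)`. -/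
def vSet : Set (Fin d → ℝ) := (centerSet d \ slabL d) ∪ (cubeVerts d ∩ slabL d)

/-- The polytope `Ξ`, the convex hull of `𝒱`. -/
def Xi : Set (Fin d → ℝ) := convexHull ℝ (vSet d)

/-!
Write `d = 2e + 1`. A point of `𝒱` has coordinate sum at most `e` or at least `e + 1`, so a
segment `[u, v]` crossing `H_{d/2}` runs from `{∑ ≤ e}` to `{∑ ≥ e + 1}` and meets `H_e` and
`H_{e+1}`. On these hyperplanes `Ξ` contains the whole hypersimplex `[0,1]^d ∩ H_c`, whose extreme
points are `0/1` vectors (two fractional coordinates can be perturbed in opposite directions;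
one alone would contradict `c ∈ ℤ`), so by Krein–Milman it is the hull of those vectors. If
`[u, v]` is extreme, `Ξ \ [u, v]` is convex, hence some `0/1` vector of sum `c` lies on `[u, v]`;
being a vertex of the cube, it is an endpoint. Thus `u` and `v` are cube vertices of sums `e` and
`e + 1`. If `u i > v i` for some `i`, pick `j` with `u j < v j` and move a unit from `i` to `j` in
`u` and back in `v`: the new pair lies in `Ξ`, has the same midpoint, and violates extremality.
So `u ≤ v`, and `v - u` is a single unit vector.

Conversely, two cube vertices differing in one coordinate span an edge of the cube, hence an
extreme segment of any subset of the cube that contains it.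
-/

section Pi

variable {𝕜 ι : Type*} {M : ι → Type*} [Semiring 𝕜] [PartialOrder 𝕜]
  [∀ i, AddCommMonoid (M i)] [∀ i, Module 𝕜 (M i)]

theorem isExtreme_pi {s t : ∀ i, Set (M i)} (h : ∀ i, IsExtreme 𝕜 (s i) (t i)) :
    IsExtreme 𝕜 (univ.pi s) (univ.pi t) := by
  refine ⟨pi_mono fun i _ ↦ (h i).subset, fun x hx y hy z hz hzxy i _ ↦ ?_⟩
  exact (h i).left_mem_of_mem_openSegment (hx i trivial) (hy i trivial) (hz i trivial)
    (Pi.openSegment_subset (s := univ) x y hzxy i trivial)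

theorem segment_eq_pi_of_eq_of_ne [IsOrderedRing 𝕜] {u v : ∀ i, M i} {i₀ : ι}
    (h : ∀ i, i ≠ i₀ → u i = v i) :
    segment 𝕜 u v = univ.pi fun i ↦ segment 𝕜 (u i) (v i) := by
  refine (Pi.segment_subset u v).antisymm fun x hx ↦ ?_
  obtain ⟨a, b, ha, hb, hab, hx₀⟩ := hx i₀ trivial
  refine ⟨a, b, ha, hb, hab, funext fun i ↦ ?_⟩
  rcases eq_or_ne i i₀ with rfl | hi
  · exact hx₀
  · have hxi : x i ∈ segment 𝕜 (u i) (v i) := hx i trivial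
    rw [← h i hi, segment_same, mem_singleton_iff] at hxi
    simp [hxi, ← h i hi, ← add_smul, hab]

end Pi

def unitCube (ι : Type*) : Set (ι → ℝ) := univ.pi fun _ ↦ Icc 0 1

-- `cubeVerts d`, for an arbitrary index type.
def cubeVertices (ι : Type*) : Set (ι → ℝ) := {x | ∀ i, x i = 0 ∨ x i = 1}

section Cube

variable {ι : Type*}

theorem convex_unitCube : Convex ℝ (unitCube ι) :=
  convex_pi fun _ _ ↦ convex_Icc 0 1

theorem extremePoints_unitCube :
    (unitCube ι).extremePoints ℝ = cubeVertices ι := by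
  rw [unitCube, extremePoints_pi, extremePoints_Icc zero_le_one]
  ext x
  simp [cubeVertices]

theorem isExtreme_Icc_segment {a b : ℝ} (ha : a = 0 ∨ a = 1) (hb : b = 0 ∨ b = 1) :
    IsExtreme ℝ (Icc 0 1) (segment ℝ a b) := by
  have hpt : ∀ x : ℝ, x = 0 ∨ x = 1 → IsExtreme ℝ (Icc 0 1) {x} := fun x hx ↦
    isExtreme_singleton.2 (by simpa using hx)
  rcases ha with rfl | rfl <;> rcases hb with rfl | rfl
  · simp [hpt 0 (Or.inl rfl)]
  · rw [segment_eq_Icc zero_le_one]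
  · rw [segment_symm, segment_eq_Icc zero_le_one]
  · simp [hpt 1 (Or.inr rfl)]

theorem isExtreme_unitCube_segment {u v : ι → ℝ} (hu : u ∈ cubeVertices ι)
    (hv : v ∈ cubeVertices ι) {i₀ : ι} (huv : ∀ i, i ≠ i₀ → u i = v i) :
    IsExtreme ℝ (unitCube ι) (segment ℝ u v) := by
  rw [segment_eq_pi_of_eq_of_ne huv]
  exact isExtreme_pi fun i ↦ isExtreme_Icc_segment (hu i) (hv i)

theorem eq_one_and_eq_zero_of_lt {a b : ℝ} (ha : a = 0 ∨ a = 1) (hb : b = 0 ∨ b = 1) (h : b < a) :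
    a = 1 ∧ b = 0 := by
  constructor <;> rcases ha with rfl | rfl <;> rcases hb with rfl | rfl <;> linarith

theorem eq_or_eq_of_mem_segment {u v q : ι → ℝ} (hu : u ∈ unitCube ι) (hv : v ∈ unitCube ι)
    (hq : q ∈ cubeVertices ι) (h : q ∈ segment ℝ u v) : u = q ∨ v = q :=
  (mem_extremePoints_iff_forall_segment.1 (extremePoints_unitCube ▸ hq)).2 u hu v hv h

theorem isExtreme_segment_of_ncard_eq_one {A : Set (ι → ℝ)} (hA : Convex ℝ A)
    (hAc : A ⊆ unitCube ι) {u v : ι → ℝ} (hu : u ∈ cubeVertices ι)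
    (hv : v ∈ cubeVertices ι) (huA : u ∈ A) (hvA : v ∈ A) (h : {i | u i ≠ v i}.ncard = 1) :
    IsExtreme ℝ A (segment ℝ u v) := by
  obtain ⟨i₀, hi₀⟩ := ncard_eq_one.1 h
  have huv : ∀ i, i ≠ i₀ → u i = v i := fun i hi ↦ by
    by_contra hne
    exact hi (hi₀ ▸ hne : i ∈ ({i₀} : Set ι))
  exact (isExtreme_unitCube_segment hu hv huv).mono hAc (hA.segment_subset huA hvA)

end Cube

def hypersimplex (ι : Type*) [Fintype ι] (c : ℝ) : Set (ι → ℝ) :=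
  unitCube ι ∩ {x | ∑ i, x i = c}

def coordSum (ι : Type*) [Fintype ι] : (ι → ℝ) →ₗ[ℝ] ℝ := ∑ i, LinearMap.proj i

section Hypersimplex

variable {ι : Type*} [Fintype ι]

@[simp]
theorem coordSum_apply (x : ι → ℝ) : coordSum ι x = ∑ i, x i := by
  simp [coordSum]

theorem exists_nat_sum_eq {x : ι → ℝ} (hx : x ∈ cubeVertices ι) :
    ∃ n : ℕ, ∑ i, x i = n := by
  classical
  refine ⟨(Finset.univ.filter fun i ↦ x i = 1).card, ?_⟩
  rw [Finset.natCast_card_filter]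
  exact Finset.sum_congr rfl fun i _ ↦ by rcases hx i with h | h <;> simp [h]

theorem exists_mem_segment_sum_eq {u v : ι → ℝ} {c : ℝ} (hu : ∑ i, u i ≤ c)
    (hv : c ≤ ∑ i, v i) : ∃ y ∈ segment ℝ u v, ∑ i, y i = c := by
  have hc : c ∈ (coordSum ι).toAffineMap '' segment ℝ u v := by
    rw [image_segment]
    simpa [segment_eq_Icc (hu.trans hv)] using ⟨hu, hv⟩
  obtain ⟨y, hy, rfl⟩ := hc
  exact ⟨y, hy, by simp⟩

theorem isCompact_hypersimplex (c : ℝ) : IsCompact (hypersimplex ι c) :=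
  (isCompact_univ_pi fun _ ↦ isCompact_Icc).inter_right
    (isClosed_eq (continuous_finsetSum _ fun i _ ↦ continuous_apply i) continuous_const)

theorem convex_hypersimplex (c : ℝ) : Convex ℝ (hypersimplex ι c) :=
  convex_unitCube.inter (by simpa using convex_hyperplane (coordSum ι).isLinear c)

theorem notMem_extremePoints_hypersimplex {c : ℝ} {x : ι → ℝ} {i j : ι} (hij : i ≠ j)
    (hi : x i ∈ Ioo 0 1) (hj : x j ∈ Ioo 0 1) : x ∉ (hypersimplex ι c).extremePoints ℝ := by
  classical
  intro hx
  set ε := min (min (x i) (1 - x i)) (min (x j) (1 - x j))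
  have hε : 0 < ε := by
    simp only [ε, lt_min_iff, sub_pos]
    exact ⟨⟨hi.1, hi.2⟩, hj.1, hj.2⟩
  have hεi : ε ≤ x i ∧ ε ≤ 1 - x i := le_min_iff.1 (min_le_left _ _)
  have hεj : ε ≤ x j ∧ ε ≤ 1 - x j := le_min_iff.1 (min_le_right _ _)
  set w : ι → ℝ := Pi.single i ε - Pi.single j ε
  have hmem : ∀ s : ℝ, (s = 1 ∨ s = -1) → x + s • w ∈ hypersimplex ι c := by
    intro s hs
    refine ⟨fun k _ ↦ ?_, ?_⟩
    · have hxk := hx.1.1 k trivial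
      simp only [w, Pi.add_apply, Pi.smul_apply, Pi.sub_apply, Pi.single_apply, smul_eq_mul]
      split_ifs with hki hkj hkj
      · exact absurd (hki.symm.trans hkj) hij
      · subst hki; constructor <;> rcases hs with rfl | rfl <;> linarith
      · subst hkj; constructor <;> rcases hs with rfl | rfl <;> linarith
      · simpa using hxk
    · simpa [w, Finset.sum_add_distrib, Finset.sum_sub_distrib, ← Finset.mul_sum] using hx.1.2
  have hxw := hx.2 (hmem 1 (Or.inl rfl)) (hmem (-1) (Or.inr rfl))
    ⟨1 / 2, 1 / 2, by norm_num, by norm_num, by norm_num, by module⟩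
  have := congrFun hxw i
  simp [w, hij] at this
  exact hε.ne' this

theorem extremePoints_hypersimplex_subset (c : ℤ) :
    (hypersimplex ι c).extremePoints ℝ ⊆ cubeVertices ι := by
  classical
  intro x hx
  show ∀ i, x i = 0 ∨ x i = 1
  by_contra! hfrac
  obtain ⟨i, hi0, hi1⟩ := hfrac
  have hIoo : ∀ k, x k ≠ 0 → x k ≠ 1 → x k ∈ Ioo 0 1 := fun k h0 h1 ↦
    have hk := hx.1.1 k trivial
    ⟨hk.1.lt_of_ne' h0, hk.2.lt_of_ne h1⟩
  -- If `i` were the only fractional coordinate, `x i = c - n` would be an integer.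
  obtain ⟨j, hji, hj0, hj1⟩ : ∃ j ≠ i, x j ≠ 0 ∧ x j ≠ 1 := by
    by_contra! h
    set y : ι → ℝ := x - Pi.single i (x i)
    have hy : ∀ k, y k = 0 ∨ y k = 1 := fun k ↦ by
      rcases eq_or_ne k i with rfl | hki
      · simp [y]
      · simpa [y, hki] using (em (x k = 0)).imp_right (h k hki)
    obtain ⟨n, hn⟩ := exists_nat_sum_eq hy
    have hxi : x i = c - n := by
      have hsum : ∑ k, x k = c := hx.1.2
      simp only [y, Pi.sub_apply, Finset.sum_sub_distrib, Finset.sum_pi_single', Finset.mem_univ,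
        if_true, hsum] at hn
      linarith
    have h0 : (0 : ℤ) < c - n := by exact_mod_cast hxi ▸ (hIoo i hi0 hi1).1
    have h1 : c - n < (1 : ℤ) := by exact_mod_cast hxi ▸ (hIoo i hi0 hi1).2
    omega
  exact notMem_extremePoints_hypersimplex hji.symm (hIoo i hi0 hi1) (hIoo j hj0 hj1) hx

theorem finite_cubeVertices : (cubeVertices ι).Finite :=
  (Set.Finite.pi (t := fun _ ↦ ({0, 1} : Set ℝ)) fun _ ↦ toFinite _).subset
    fun _ hx i _ ↦ hx i

theorem hypersimplex_subset_convexHull (c : ℤ) :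
    hypersimplex ι c ⊆ convexHull ℝ (hypersimplex ι c ∩ cubeVertices ι) := by
  have hclosed : IsClosed (convexHull ℝ (hypersimplex ι c ∩ cubeVertices ι)) :=
    (finite_cubeVertices.subset inter_subset_right).isCompact_convexHull ℝ |>.isClosed
  calc hypersimplex ι c
      = closure (convexHull ℝ ((hypersimplex ι c).extremePoints ℝ)) :=
        (closure_convexHull_extremePoints (isCompact_hypersimplex _) (convex_hypersimplex _)).symm
    _ ⊆ _ := closure_minimal (convexHull_mono (subset_inter extremePoints_subset
        (extremePoints_hypersimplex_subset c))) hclosed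

end Hypersimplex

section Faces

variable {ι : Type*} [Fintype ι] {A : Set (ι → ℝ)}

theorem endpoint_mem_of_isExtreme_segment (hA : Convex ℝ A) (hAc : A ⊆ unitCube ι) {c : ℤ}
    (hvert : hypersimplex ι c ∩ cubeVertices ι ⊆ A) {u v y : ι → ℝ}
    (hext : IsExtreme ℝ A (segment ℝ u v)) (hy : y ∈ segment ℝ u v) (hyc : ∑ i, y i = c) :
    u ∈ hypersimplex ι c ∩ cubeVertices ι ∨
      v ∈ hypersimplex ι c ∩ cubeVertices ι := by
  obtain ⟨q, hq, hqseg⟩ : ∃ q ∈ hypersimplex ι c ∩ cubeVertices ι,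
      q ∈ segment ℝ u v := by
    by_contra! h
    have hsub : convexHull ℝ (hypersimplex ι c ∩ cubeVertices ι) ⊆
        A \ segment ℝ u v :=
      convexHull_min (fun q hq ↦ ⟨hvert hq, h q hq⟩) (hext.convex_sdiff hA)
    exact (hsub (hypersimplex_subset_convexHull c ⟨hAc (hext.subset hy), hyc⟩)).2 hy
  rcases eq_or_eq_of_mem_segment (hAc (hext.subset (left_mem_segment ℝ u v)))
    (hAc (hext.subset (right_mem_segment ℝ u v))) hq.2 hqseg with rfl | rfl
  exacts [Or.inl hq, Or.inr hq]

theorem le_of_isExtreme_segment (hAc : A ⊆ unitCube ι) {u v : ι → ℝ}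
    (hu : u ∈ cubeVertices ι) (hv : v ∈ cubeVertices ι) (hlt : ∑ i, u i < ∑ i, v i)
    (hvert : ∀ q ∈ cubeVertices ι,
      (∑ i, q i = ∑ i, u i ∨ ∑ i, q i = ∑ i, v i) → q ∈ A)
    (hext : IsExtreme ℝ A (segment ℝ u v)) : u ≤ v := by
  classical
  intro i
  by_contra! hvu
  obtain ⟨hui, hvi⟩ := eq_one_and_eq_zero_of_lt (hu i) (hv i) hvu
  obtain ⟨j, -, huvj⟩ := Finset.exists_lt_of_sum_lt hlt
  obtain ⟨hvj, huj⟩ := eq_one_and_eq_zero_of_lt (hv j) (hu j) huvj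
  have hij : i ≠ j := by rintro rfl; linarith
  -- Moving a unit from `i` to `j` in `u`, and back in `v`, keeps both sums and the midpoint.
  set w : ι → ℝ := Pi.single j 1 - Pi.single i 1
  have hw : ∑ k, w k = 0 := by simp [w, Finset.sum_sub_distrib]
  have hu' : ∀ k, (u + w) k = 0 ∨ (u + w) k = 1 := fun k ↦ by
    rcases eq_or_ne k i with rfl | hki
    · simp [w, hij, hui]
    rcases eq_or_ne k j with rfl | hkj
    · simp [w, hki, huj]
    simpa [w, hki, hkj] using hu k
  have hv' : ∀ k, (v - w) k = 0 ∨ (v - w) k = 1 := fun k ↦ by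
    rcases eq_or_ne k i with rfl | hki
    · simp [w, hij, hvi]
    rcases eq_or_ne k j with rfl | hkj
    · simp [w, hki, hvj]
    simpa [w, hki, hkj] using hv k
  have hseg : u + w ∈ segment ℝ u v :=
    hext.left_mem_of_mem_openSegment
      (hvert _ hu' (Or.inl (by simp [Finset.sum_add_distrib, hw])))
      (hvert _ hv' (Or.inr (by simp [Finset.sum_sub_distrib, hw])))
      ⟨1 / 2, 1 / 2, by norm_num, by norm_num, by norm_num, rfl⟩
      ⟨1 / 2, 1 / 2, by norm_num, by norm_num, by norm_num, by module⟩
  rcases eq_or_eq_of_mem_segment (hAc (hext.subset (left_mem_segment ℝ u v)))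
    (hAc (hext.subset (right_mem_segment ℝ u v))) hu' hseg with h | h
  · simpa [w, hij] using congrFun h i
  · have := congrArg (fun x ↦ ∑ k, x k) h
    simp [Finset.sum_add_distrib, hw] at this
    linarith

theorem ncard_ne_eq_sum_sub {u v : ι → ℝ} (hu : u ∈ cubeVertices ι)
    (hv : v ∈ cubeVertices ι) (huv : u ≤ v) :
    ({i | u i ≠ v i}.ncard : ℝ) = ∑ i, v i - ∑ i, u i := by
  classical
  rw [← Finset.sum_sub_distrib, Set.ncard_eq_toFinset_card', Set.toFinset_ofPred,
    Finset.natCast_card_filter]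
  refine Finset.sum_congr rfl fun i _ ↦ ?_
  by_cases hi : u i = v i
  · simp [hi]
  · obtain ⟨hvi, hui⟩ := eq_one_and_eq_zero_of_lt (hv i) (hu i) ((huv i).lt_of_ne hi)
    simp [hvi, hui]

theorem edge_of_isExtreme_segment (hA : Convex ℝ A) (hAc : A ⊆ unitCube ι) (c : ℤ)
    (hvert : ∀ q ∈ cubeVertices ι, (∑ i, q i = c ∨ ∑ i, q i = c + 1) → q ∈ A)
    {u v : ι → ℝ} (hu : ∑ i, u i ≤ c) (hv : c + 1 ≤ ∑ i, v i)
    (hext : IsExtreme ℝ A (segment ℝ u v)) :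
    u ∈ cubeVertices ι ∧ v ∈ cubeVertices ι ∧ {i | u i ≠ v i}.ncard = 1 ∧
      ∑ i, u i = c ∧ ∑ i, v i = c + 1 := by
  obtain ⟨y, hy, hyc⟩ := exists_mem_segment_sum_eq hu (by linarith)
  obtain ⟨z, hz, hzc⟩ := exists_mem_segment_sum_eq (u := u) (v := v) (c := ((c + 1 : ℤ) : ℝ))
    (by push_cast; linarith) (by push_cast; exact hv)
  obtain ⟨⟨-, hsu⟩, hu01⟩ := (endpoint_mem_of_isExtreme_segment hA hAc
    (fun q hq ↦ hvert q hq.2 (Or.inl hq.1.2)) hext hy hyc).resolve_right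
    fun h ↦ by have hsv : ∑ i, v i = c := h.1.2; linarith
  obtain ⟨⟨-, hsv⟩, hv01⟩ := (endpoint_mem_of_isExtreme_segment hA hAc
    (fun q hq ↦ hvert q hq.2 (Or.inr (by exact_mod_cast hq.1.2))) hext hz hzc).resolve_left
    fun h ↦ by linarith [(by exact_mod_cast h.1.2 : ∑ i, u i = c + 1)]
  replace hsu : ∑ i, u i = c := hsu
  replace hsv : ∑ i, v i = c + 1 := by exact_mod_cast hsv
  have huv := le_of_isExtreme_segment hAc hu01 hv01 (by linarith [hsu])
    (fun q hq h ↦ hvert q hq (by rwa [hsu, hsv] at h)) hext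
  have hcard := ncard_ne_eq_sum_sub hu01 hv01 huv
  exact ⟨hu01, hv01, by exact_mod_cast (by linarith : ({i | u i ≠ v i}.ncard : ℝ) = 1), hsu, hsv⟩

theorem sum_le_and_le_sum_of_mem_openSegment {u v x : ι → ℝ} {a b : ℝ}
    (hu : ∑ i, u i ≤ a ∨ b ≤ ∑ i, u i) (hv : ∑ i, v i ≤ a ∨ b ≤ ∑ i, v i)
    (hx : x ∈ openSegment ℝ u v) (ha : a < ∑ i, x i) (hb : ∑ i, x i < b) :
    (∑ i, u i ≤ a ∧ b ≤ ∑ i, v i) ∨ (∑ i, v i ≤ a ∧ b ≤ ∑ i, u i) := by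
  have hxs : ∑ i, x i ∈ openSegment ℝ (∑ i, u i) (∑ i, v i) := by
    have := mem_image_of_mem (coordSum ι).toAffineMap hx
    rw [image_openSegment] at this
    simpa using this
  rcases hu with hu | hu <;> rcases hv with hv | hv
  · exact absurd ((convex_Iic a).openSegment_subset hu hv hxs) ha.not_ge
  · exact Or.inl ⟨hu, hv⟩
  · exact Or.inr ⟨hv, hu⟩
  · exact absurd ((convex_Ici b).openSegment_subset hu hv hxs) hb.not_ge

end Faces

section Xi

variable {d}

theorem vSet_subset_unitCube : vSet d ⊆ unitCube (Fin d) := by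
  rintro x (⟨⟨hx, -⟩, -⟩ | ⟨hx, -⟩) i -
  · rcases hx i with h | h | h <;> rw [h] <;> norm_num
  · rcases hx i with h | h <;> rw [h] <;> norm_num

theorem Xi_subset_unitCube : Xi d ⊆ unitCube (Fin d) :=
  convexHull_min vSet_subset_unitCube convex_unitCube

theorem mem_Xi_of_sum_eq {e : ℕ} {q : Fin (2 * e + 1) → ℝ}
    (hq : q ∈ cubeVertices (Fin (2 * e + 1)))
    (hs : ∑ i, q i = e ∨ ∑ i, q i = e + 1) : q ∈ Xi (2 * e + 1) := by
  refine subset_convexHull ℝ _ (Or.inr ⟨hq, ?_⟩)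
  simp only [slabL, mem_ofPred_eq]
  push_cast
  rcases hs with h | h <;> constructor <;> linarith

theorem sum_le_or_le_sum_of_mem_vSet {e : ℕ} {w : Fin (2 * e + 1) → ℝ}
    (hw : w ∈ vSet (2 * e + 1)) : ∑ i, w i ≤ e ∨ e + 1 ≤ ∑ i, w i := by
  rcases hw with ⟨-, hw⟩ | ⟨hw, -⟩
  · simp only [slabL, mem_ofPred_eq, not_and_or, not_le] at hw
    push_cast at hw
    rcases hw with h | h
    exacts [Or.inl (by linarith), Or.inr (by linarith)]
  · obtain ⟨n, hn⟩ := exists_nat_sum_eq hw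
    rw [hn]
    rcases le_or_gt n e with h | h
    exacts [Or.inl (by exact_mod_cast h), Or.inr (by exact_mod_cast h)]

theorem edge_of_isExtreme_segment_Xi {e : ℕ} {u v : Fin (2 * e + 1) → ℝ} (hu : ∑ i, u i ≤ e)
    (hv : e + 1 ≤ ∑ i, v i) (hext : IsExtreme ℝ (Xi (2 * e + 1)) (segment ℝ u v)) :
    u ∈ cubeVertices (Fin (2 * e + 1)) ∧ v ∈ cubeVertices (Fin (2 * e + 1)) ∧
      {i | u i ≠ v i}.ncard = 1 ∧ ∑ i, u i = e ∧ ∑ i, v i = e + 1 := by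
  have hvert : ∀ q ∈ cubeVertices (Fin (2 * e + 1)),
      (∑ i, q i = ((e : ℤ) : ℝ) ∨ ∑ i, q i = ((e : ℤ) : ℝ) + 1) → q ∈ Xi (2 * e + 1) :=
    fun q hq hs ↦ mem_Xi_of_sum_eq hq (by exact_mod_cast hs)
  simpa only [Int.cast_natCast] using
    edge_of_isExtreme_segment (convex_convexHull ℝ _) Xi_subset_unitCube e hvert
      (by exact_mod_cast hu) (by exact_mod_cast hv) hext

end Xi

theorem crossing_edges_Xi (hodd : Odd d)
    (u v : Fin d → ℝ) (hu : u ∈ Set.extremePoints ℝ (Xi d))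
    (hv : v ∈ Set.extremePoints ℝ (Xi d)) :
    (IsExtreme ℝ (Xi d) (segment ℝ u v) ∧
        ∃ x ∈ openSegment ℝ u v, ∑ i, x i = (d : ℝ) / 2) ↔
      ((∀ i, u i = 0 ∨ u i = 1) ∧ (∀ i, v i = 0 ∨ v i = 1) ∧
        {i | u i ≠ v i}.ncard = 1 ∧
        ((∑ i, u i = ((d : ℝ) - 1) / 2 ∧ ∑ i, v i = ((d : ℝ) + 1) / 2) ∨
          (∑ i, u i = ((d : ℝ) + 1) / 2 ∧ ∑ i, v i = ((d : ℝ) - 1) / 2))) := by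
  obtain ⟨e, rfl⟩ := hodd
  have hlo : (((2 * e + 1 : ℕ) : ℝ) - 1) / 2 = e := by push_cast; ring
  have hhi : (((2 * e + 1 : ℕ) : ℝ) + 1) / 2 = e + 1 := by push_cast; ring
  have hmid : ((2 * e + 1 : ℕ) : ℝ) / 2 = e + 1 / 2 := by push_cast; ring
  rw [hlo, hhi, hmid]
  constructor
  · rintro ⟨hext, x, hx, hxsum⟩
    rcases sum_le_and_le_sum_of_mem_openSegment
      (sum_le_or_le_sum_of_mem_vSet (extremePoints_convexHull_subset hu))
      (sum_le_or_le_sum_of_mem_vSet (extremePoints_convexHull_subset hv)) hx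
      (by linarith) (by linarith) with ⟨h₁, h₂⟩ | ⟨h₁, h₂⟩
    · obtain ⟨hu01, hv01, hcard, hsu, hsv⟩ := edge_of_isExtreme_segment_Xi h₁ h₂ hext
      exact ⟨hu01, hv01, hcard, Or.inl ⟨hsu, hsv⟩⟩
    · obtain ⟨hv01, hu01, hcard, hsv, hsu⟩ :=
        edge_of_isExtreme_segment_Xi h₁ h₂ (segment_symm ℝ u v ▸ hext)
      exact ⟨hu01, hv01, by simpa only [ne_comm] using hcard, Or.inr ⟨hsu, hsv⟩⟩
  · rintro ⟨hu01, hv01, hcard, hsums⟩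
    refine ⟨isExtreme_segment_of_ncard_eq_one (convex_convexHull ℝ _) Xi_subset_unitCube
      hu01 hv01 hu.1 hv.1 hcard, (1 / 2 : ℝ) • u + (1 / 2 : ℝ) • v,
      ⟨1 / 2, 1 / 2, by norm_num, by norm_num, by norm_num, rfl⟩, ?_⟩
    simp only [Pi.add_apply, Pi.smul_apply, smul_eq_mul, Finset.sum_add_distrib, ← Finset.mul_sum]
    rcases hsums with ⟨h₁, h₂⟩ | ⟨h₁, h₂⟩ <;> rw [h₁, h₂] <;> ring
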